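/- Let P be a formula-based program, I an interpretation and α a countable ordinal such that I ⊑_α T_P(I). Write I_i = T^i_{P,α}(I) for ordinals i < ω₁ and I_∞ = T^{ω₁}_{P,α}(I). Then for every formula φ and every assignment h: (1) if deg(⟦φ⟧^I_h) < α, then ⟦φ⟧^{I_∞}_h = ⟦φ⟧^I_h (condition C1); (2) if ⟦φ⟧^{I_i}_h = T_α for some i < ω₁, then ⟦φ⟧^{I_∞}_h = T_α (condition C2); (3) if ⟦φ⟧^{I_i}_h = F_α for all i < ω₁, then ⟦φ⟧^{I_∞}_h = F_α (condition C3); (4) F_α < ⟦φ⟧^{I_∞}_h < T_α holds if and only if none of the hypotheses of C1, C2, C3 holds. -/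

import Mathlib

/-!
Infinite-valued semantics for formula-based logic programs
(Rondogiannis–Wadge style), following Lüdecke,
"Every Formula-Based Logic Program Has a Least Infinite-Valued Model".
-/

noncomputable section

namespace ILP

attribute [local instance] Classical.propDecidable

/-- The first uncountable ordinal. -/
def omega1 : Ordinal.{0} := Ordinal.omega 1

lemma omega1_isLimit : Order.IsSuccLimit omega1 := Cardinal.isSuccLimit_omega 1

lemma zero_lt_omega1 : (0 : Ordinal) < omega1 := omega1_isLimit.pos

lemma succ_lt_omega1 {a : Ordinal} (h : a < omega1) : a + 1 < omega1 := by
  rw [Ordinal.add_one_eq_succ]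
  exact omega1_isLimit.succ_lt h

/-- Pre-truth-values: `F α`, `0`, `T α` for arbitrary ordinals `α`. -/
inductive TVPre : Type 1 where
  | F : Ordinal → TVPre
  | zero : TVPre
  | T : Ordinal → TVPre

/-- A pre-truth-value is countable if its index is a countable ordinal. -/
def TVPre.countable : TVPre → Prop
  | .F a => a < omega1
  | .zero => True
  | .T a => a < omega1

/-- The set `W` of truth values:
`F_α` (false values) for countable `α`, `0`, and `T_α` (true values) for countable `α`. -/
def W : Type 1 := {v : TVPre // v.countable}

/-- The strict order on truth values:
`F_0 < F_1 < ... < 0 < ... < T_1 < T_0`. -/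
def TVPre.lt : TVPre → TVPre → Prop
  | .F a, .F b => a < b
  | .F _, .zero => True
  | .F _, .T _ => True
  | .zero, .T _ => True
  | .T a, .T b => b < a
  | _, _ => False

instance : LT W := ⟨fun x y => TVPre.lt x.1 y.1⟩

instance : LE W := ⟨fun x y => x = y ∨ x < y⟩

lemma TVPre.lt_trans {a b c : TVPre} (hab : a.lt b) (hbc : b.lt c) : a.lt c := by
  cases a <;> cases b <;> cases c <;> simp_all [TVPre.lt] <;>
    first | exact hab.trans hbc | exact hbc.trans hab

lemma TVPre.lt_irrefl {a : TVPre} (h : a.lt a) : False := by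
  cases a <;> simp_all [TVPre.lt]

instance instLinearOrderW : LinearOrder W where
  le_refl a := Or.inl rfl
  le_trans a b c hab hbc := by
    rcases hab with rfl | hab
    · exact hbc
    rcases hbc with rfl | hbc
    · exact Or.inr hab
    · exact Or.inr (TVPre.lt_trans hab hbc)
  le_antisymm a b hab hba := by
    rcases hab with rfl | hab
    · rfl
    rcases hba with rfl | hba
    · rfl
    exact absurd (TVPre.lt_trans hab hba) TVPre.lt_irrefl
  le_total a b := by
    obtain ⟨a1, ha⟩ := a
    obtain ⟨b1, hb⟩ := b
    have tri : a1 = b1 ∨ a1.lt b1 ∨ b1.lt a1 := by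
      cases a1 <;> cases b1 <;> simp [TVPre.lt] <;> (try rename_i x y) <;>
        (try rcases lt_trichotomy x y with h | h | h) <;> tauto
    rcases tri with h | h | h
    · exact Or.inl (Or.inl (Subtype.ext h))
    · exact Or.inl (Or.inr h)
    · exact Or.inr (Or.inr h)
  lt_iff_le_not_ge a b := by
    constructor
    · intro h
      refine ⟨Or.inr h, ?_⟩
      rintro (rfl | h')
      · exact TVPre.lt_irrefl h
      · exact TVPre.lt_irrefl (TVPre.lt_trans h h')
    · rintro ⟨rfl | h, h2⟩
      · exact absurd (Or.inl rfl) h2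
      · exact h
  toDecidableLE := Classical.decRel _

/-- The false value `F_α`. -/
def WF (a : Ordinal) (h : a < omega1) : W := ⟨.F a, h⟩

/-- The true value `T_α`. -/
def WT (a : Ordinal) (h : a < omega1) : W := ⟨.T a, h⟩

/-- The undefined value `0`. -/
def WZ : W := ⟨.zero, trivial⟩

/-- `deg w < α` : the degree of `w` (which is `∞` for `0`) is less than `α`. -/
def degLT (w : W) (α : Ordinal) : Prop :=
  match w.1 with
  | .F a => a < α
  | .zero => False
  | .T a => a < α

/-- The set of indices of true values occurring in `M`. -/
def TIdx (M : Set W) : Set Ordinal := {a | ∃ w ∈ M, w.1 = TVPre.T a}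

/-- The set of indices of false values occurring in `M`. -/
def FIdx (M : Set W) : Set Ordinal := {a | ∃ w ∈ M, w.1 = TVPre.F a}

lemma mem_lt_omega1_of_TIdx {M : Set W} {a : Ordinal} (h : a ∈ TIdx M) : a < omega1 := by
  obtain ⟨w, _, hw⟩ := h
  have := w.2
  rw [hw] at this
  exact this

lemma mem_lt_omega1_of_FIdx {M : Set W} {a : Ordinal} (h : a ∈ FIdx M) : a < omega1 := by
  obtain ⟨w, _, hw⟩ := h
  have := w.2
  rw [hw] at this
  exact this

/-- The least upper bound of a subset of `W`. -/
def Wsup (M : Set W) : W :=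
  if h : (TIdx M).Nonempty then
    WT (sInf (TIdx M))
      (lt_of_le_of_lt (csInf_le' h.choose_spec) (mem_lt_omega1_of_TIdx h.choose_spec))
  else if WZ ∈ M then WZ
  else if h2 : sSup (FIdx M) < omega1 then WF (sSup (FIdx M)) h2
  else WZ

/-- The greatest lower bound of a subset of `W`. -/
def Winf (M : Set W) : W :=
  if h : (FIdx M).Nonempty then
    WF (sInf (FIdx M))
      (lt_of_le_of_lt (csInf_le' h.choose_spec) (mem_lt_omega1_of_FIdx h.choose_spec))
  else if WZ ∈ M then WZ
  else if h2 : sSup (TIdx M) < omega1 then WT (sSup (TIdx M)) h2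
  else WZ

/-- The semantics of negation on `W`. -/
def Wneg : W → W
  | ⟨.F a, h⟩ => WT (a + 1) (succ_lt_omega1 h)
  | ⟨.zero, _⟩ => WZ
  | ⟨.T a, h⟩ => WF (a + 1) (succ_lt_omega1 h)

/-! ### Syntax -/

/-- A first-order language with finitely many predicate symbols (at least one),
finitely many function symbols and finitely many constants (at least one). -/
structure Language where
  nPred : ℕ
  predAr : Fin nPred → ℕ
  nFun : ℕ
  funAr : Fin nFun → ℕ
  nConst : ℕ
  npos : 1 ≤ nPred
  cpos : 1 ≤ nConst

variable {L : Language}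

/-- Terms of the language; variables are indexed by natural numbers. -/
inductive Term (L : Language) : Type where
  | var : ℕ → Term L
  | const : Fin L.nConst → Term L
  | func : (f : Fin L.nFun) → (Fin (L.funAr f) → Term L) → Term L

/-- A term is ground if it contains no variables. -/
def Term.ground : Term L → Prop
  | .var _ => False
  | .const _ => True
  | .func _ ts => ∀ i, (ts i).ground

/-- The Herbrand universe: the set of ground terms. -/
def HU (L : Language) : Type := {t : Term L // t.ground}

/-- Formulas of the language. -/
inductive Formula (L : Language) : Type where
  | verum : Formula L
  | falsum : Formula L
  | atom : (p : Fin L.nPred) → (Fin (L.predAr p) → Term L) → Formula L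
  | neg : Formula L → Formula L
  | conj : Formula L → Formula L → Formula L
  | disj : Formula L → Formula L → Formula L
  | all : ℕ → Formula L → Formula L
  | ex : ℕ → Formula L → Formula L

/-- A ground atom: a predicate symbol applied to ground terms.
The Herbrand base `H_B` is the type of ground atoms. -/
structure GroundAtom (L : Language) : Type where
  pred : Fin L.nPred
  args : Fin (L.predAr pred) → HU L

/-- An (infinite-valued Herbrand) interpretation. -/
def Interp (L : Language) : Type 1 := GroundAtom L → W

/-- Evaluation of a term under a variable assignment. -/
def Term.evalT (h : ℕ → HU L) : Term L → HU L
  | .var n => h n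
  | .const c => ⟨.const c, trivial⟩
  | .func f ts => ⟨.func f fun i => ((ts i).evalT h).1, fun i => ((ts i).evalT h).2⟩

/-- The infinite-valued semantics of formulas, relative to an interpretation and
a variable assignment. -/
def Formula.eval (I : Interp L) : Formula L → (ℕ → HU L) → W
  | .verum, _ => WT 0 zero_lt_omega1
  | .falsum, _ => WF 0 zero_lt_omega1
  | .atom p ts, h => I ⟨p, fun i => (ts i).evalT h⟩
  | .neg φ, h => Wneg (φ.eval I h)
  | .conj φ ψ, h => min (φ.eval I h) (ψ.eval I h)
  | .disj φ ψ, h => max (φ.eval I h) (ψ.eval I h)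
  | .ex v φ, h => Wsup (Set.range fun u : HU L => φ.eval I (Function.update h v u))
  | .all v φ, h => Winf (Set.range fun u : HU L => φ.eval I (Function.update h v u))

/-- The variables occurring in a term. -/
def Term.vars : Term L → Set ℕ
  | .var n => {n}
  | .const _ => ∅
  | .func _ ts => ⋃ i, (ts i).vars

/-- The free variables of a formula. -/
def Formula.freeVars : Formula L → Set ℕ
  | .verum => ∅
  | .falsum => ∅
  | .atom _ ts => ⋃ i, (ts i).vars
  | .neg φ => φ.freeVars
  | .conj φ ψ => φ.freeVars ∪ ψ.freeVars
  | .disj φ ψ => φ.freeVars ∪ ψ.freeVars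
  | .all v φ => φ.freeVars \ {v}
  | .ex v φ => φ.freeVars \ {v}

/-- Applying a substitution to a term. -/
def Term.subst (σ : ℕ → Term L) : Term L → Term L
  | .var n => σ n
  | .const c => .const c
  | .func f ts => .func f fun i => (ts i).subst σ

/-- Applying a substitution to a formula (bound variables are not substituted). -/
def Formula.subst (σ : ℕ → Term L) : Formula L → Formula L
  | .verum => .verum
  | .falsum => .falsum
  | .atom p ts => .atom p fun i => (ts i).subst σ
  | .neg φ => .neg (φ.subst σ)
  | .conj φ ψ => .conj (φ.subst σ) (ψ.subst σ)
  | .disj φ ψ => .disj (φ.subst σ) (ψ.subst σ)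
  | .all v φ => .all v (φ.subst (Function.update σ v (Term.var v)))
  | .ex v φ => .ex v (φ.subst (Function.update σ v (Term.var v)))

/-- A formula-based rule `A ← φ`: the head is an atom `P(t₁,…,tₛ)`
(hence distinct from `⊤` and `⊥`) and the body is an arbitrary formula. -/
structure Rule (L : Language) : Type where
  headPred : Fin L.nPred
  headArgs : Fin (L.predAr headPred) → Term L
  body : Formula L

/-- The head of a rule, as an atomic formula. -/
def Rule.headAtom (r : Rule L) : Formula L := .atom r.headPred r.headArgs

/-- A formula-based logic program: a finite set of formula-based rules. -/
structure Program (L : Language) : Type where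
  rules : Set (Rule L)
  finite : rules.Finite

/-- The set `P_G` of ground instances of a program `P`: pairs `(Aσ, φσ)` obtained
from a rule `A ← φ` of `P` and a substitution `σ` such that `Aσ` is a ground atom
and `φσ` has no free variables. -/
def groundInstances (P : Program L) : Set (GroundAtom L × Formula L) :=
  {Aφ | ∃ r ∈ P.rules, ∃ σ : ℕ → Term L,
    (∃ hg : ∀ i, ((r.headArgs i).subst σ).ground,
      Aφ.1 = ⟨r.headPred, fun i => ⟨(r.headArgs i).subst σ, hg i⟩⟩) ∧
    Aφ.2 = r.body.subst σ ∧ (r.body.subst σ).freeVars = ∅}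

/-- A default variable assignment (possible since there is at least one constant). -/
def defaultAssignment (L : Language) : ℕ → HU L :=
  fun _ => ⟨.const ⟨0, L.cpos⟩, trivial⟩

/-- The value of a closed formula (independent of the variable assignment). -/
def Formula.evalClosed (I : Interp L) (φ : Formula L) : W :=
  φ.eval I (defaultAssignment L)

/-- The immediate consequence operator `T_P`. -/
def TP (P : Program L) (I : Interp L) : Interp L :=
  fun A => Wsup {w | ∃ φ : Formula L, (A, φ) ∈ groundInstances P ∧ w = φ.evalClosed I}

/-- `I ∥ F_β` : the set of ground atoms receiving value `F_β` under `I`. -/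
def Ifalse (I : Interp L) (β : Ordinal) : Set (GroundAtom L) := {A | (I A).1 = TVPre.F β}

/-- `I ∥ T_β` : the set of ground atoms receiving value `T_β` under `I`. -/
def Itrue (I : Interp L) (β : Ordinal) : Set (GroundAtom L) := {A | (I A).1 = TVPre.T β}

/-- `I =_α J`. -/
def eqa (α : Ordinal) (I J : Interp L) : Prop :=
  ∀ β ≤ α, Ifalse I β = Ifalse J β ∧ Itrue I β = Itrue J β

/-- `I ⊑_α J`. -/
def sqa (α : Ordinal) (I J : Interp L) : Prop :=
  (∀ β < α, eqa β I J) ∧ Ifalse J α ⊆ Ifalse I α ∧ Itrue I α ⊆ Itrue J α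

/-- `I ⊏_α J`. -/
def sqlt (α : Ordinal) (I J : Interp L) : Prop := sqa α I J ∧ ¬ eqa α I J

/-- `I ⊑_∞ J`. -/
def sqinf (I J : Interp L) : Prop := I = J ∨ ∃ α < omega1, sqlt α I J

/-- `I` satisfies the rule `A ← φ`. -/
def satisfies (I : Interp L) (r : Rule L) : Prop :=
  ∀ h : ℕ → HU L, r.body.eval I h ≤ r.headAtom.eval I h

/-- `I` is a model of `P`. -/
def isModel (I : Interp L) (P : Program L) : Prop := ∀ r ∈ P.rules, satisfies I r

/-- The transfinite iterates `T^β_{P,α}(I)`. -/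
def iter (P : Program L) (α : Ordinal) (hα : α < omega1) (I : Interp L)
    (β : Ordinal) : Interp L :=
  Ordinal.limitRecOn β I (fun _ J => TP P J)
    (fun β _ ih A =>
      if degLT (I A) α then I A
      else if ∃ γ, ∃ hγ : γ < β, (ih γ hγ A).1 = TVPre.T α then WT α hα
      else if ∀ γ, ∀ hγ : γ < β, (ih γ hγ A).1 = TVPre.F α then WF α hα
      else WF (α + 1) (succ_lt_omega1 hα))

/-- The union `⊔_{γ<α} I_γ` of a family of interpretations. -/
def unionInterp (α : Ordinal) (hα : α < omega1) (Ig : ∀ γ, γ < α → Interp L) :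
    Interp L := fun A =>
  if h : ∃ ζ, ∃ hζ : ζ < α, ((Ig ζ hζ) A).1 = TVPre.F ζ ∨ ((Ig ζ hζ) A).1 = TVPre.T ζ
  then Ig h.choose h.choose_spec.choose A
  else WF α hα

/-- The approximants `M_α` of a program `P`. -/
def approx (P : Program L) (α : Ordinal) : Interp L :=
  if hα : α < omega1 then
    if (∀ γ, ∀ _ : γ < α, ∀ ζ, ζ < γ → eqa ζ (approx P ζ) (approx P γ)) ∧
        sqa α (unionInterp α hα fun γ _ => approx P γ)
          (TP P (unionInterp α hα fun γ _ => approx P γ))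
    then iter P α hα (unionInterp α hα fun γ _ => approx P γ) omega1
    else fun _ => WF 0 zero_lt_omega1
  else fun _ => WF 0 zero_lt_omega1
termination_by α
decreasing_by
  all_goals first | assumption | exact lt_trans ‹_› ‹_›

/-- The depth `δ_P` of a program `P`. -/
def depth (P : Program L) : Ordinal :=
  sInf {δ | δ < omega1 ∧ ∀ γ, δ ≤ γ → γ < omega1 →
    Ifalse (approx P γ) γ = ∅ ∧ Itrue (approx P γ) γ = ∅}

/-- The least infinite-valued model `M_P` of a program `P`. -/
def MP (P : Program L) : Interp L := fun A =>
  if degLT (approx P (depth P) A) (depth P) then approx P (depth P) A else WZ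

/-! ### Three-valued semantics -/

/-- The three truth values `F < 0 < T`. -/
inductive TV3 : Type where
  | F : TV3
  | Z : TV3
  | T : TV3
deriving DecidableEq

/-- Numeric coding of the three truth values. -/
def TV3.toNat : TV3 → ℕ
  | .F => 0
  | .Z => 1
  | .T => 2

instance : LinearOrder TV3 :=
  LinearOrder.lift' TV3.toNat (fun a b => by
    cases a <;> cases b <;> simp [TV3.toNat])

/-- A three-valued interpretation. -/
def Interp3 (L : Language) : Type := GroundAtom L → TV3

/-- Supremum of a set of three-valued truth values. -/
def sup3 (S : Set TV3) : TV3 :=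
  if TV3.T ∈ S then .T else if TV3.Z ∈ S then .Z else .F

/-- Infimum of a set of three-valued truth values. -/
def inf3 (S : Set TV3) : TV3 :=
  if TV3.F ∈ S then .F else if TV3.Z ∈ S then .Z else .T

/-- Three-valued negation. -/
def neg3 : TV3 → TV3
  | .F => .T
  | .Z => .Z
  | .T => .F

/-- The three-valued semantics of formulas. -/
def Formula.eval3 (K : Interp3 L) : Formula L → (ℕ → HU L) → TV3
  | .verum, _ => .T
  | .falsum, _ => .F
  | .atom p ts, h => K ⟨p, fun i => (ts i).evalT h⟩
  | .neg φ, h => neg3 (φ.eval3 K h)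
  | .conj φ ψ, h => min (φ.eval3 K h) (ψ.eval3 K h)
  | .disj φ ψ, h => max (φ.eval3 K h) (ψ.eval3 K h)
  | .ex v φ, h => sup3 (Set.range fun u : HU L => φ.eval3 K (Function.update h v u))
  | .all v φ, h => inf3 (Set.range fun u : HU L => φ.eval3 K (Function.update h v u))

/-- Collapsing all false values to `F` and all true values to `T`. -/
def collapse : W → TV3 := fun w =>
  match w.1 with
  | .F _ => .F
  | .zero => .Z
  | .T _ => .T

/-- The collapse of an infinite-valued interpretation. -/
def collapseI (I : Interp L) : Interp3 L := fun A => collapse (I A)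

/-- `K` is a three-valued model of `P`. -/
def isModel3 (K : Interp3 L) (P : Program L) : Prop :=
  ∀ r ∈ P.rules, ∀ h : ℕ → HU L, r.body.eval3 K h ≤ r.headAtom.eval3 K h

/-- The three-valued interpretation `M_{P,3}`. -/
def MP3 (P : Program L) : Interp3 L := collapseI (MP P)

/-- The negation degree of a formula. -/
def Formula.negDeg : Formula L → ℕ
  | .verum => 0
  | .falsum => 0
  | .atom _ _ => 0
  | .neg φ => φ.negDeg + 1
  | .conj φ ψ => max φ.negDeg ψ.negDeg
  | .disj φ ψ => max φ.negDeg ψ.negDeg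
  | .all _ φ => φ.negDeg
  | .ex _ φ => φ.negDeg


/-!
The order `⊑_α` on interpretations is the pointwise version of the relation
`ApproxLE F_α T_α` on truth values: `v = w`, or `v ∈ [F_α, T_α)` and `w ∈ (F_α, T_α]`.
Negation, `min`, `max`, suprema and infima all preserve this relation (suprema because a
supremum equal to `T_α` is attained, infima dually), so the value of every formula, and
`T_P`, are monotone for it. Transfinite induction then shows that the iterates form a
`⊑_α`-chain with `I_j ⊑_α T_P(I_j)`, which gives C1 and C2. Conversely, the value of each
atom is settled at some countable stage, and since the Herbrand base is countable a single
stage `k < ω₁` has `I_{ω₁} ⊑_α I_k`; by monotonicity this holds for every formula, which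
gives C3 and the characterisation (4).
-/

section ApproxLE

variable {β : Type*} [LinearOrder β] {p q u v w : β}

/-- For `p = F_α` and `q = T_α` this is the value-level form of `⊑_α`. -/
def ApproxLE (p q v w : β) : Prop := v = w ∨ (v ∈ Set.Ico p q ∧ w ∈ Set.Ioc p q)

namespace ApproxLE

theorem refl (v : β) : ApproxLE p q v v := Or.inl rfl

theorem trans (h₁ : ApproxLE p q u v) (h₂ : ApproxLE p q v w) : ApproxLE p q u w := by
  rcases h₁ with rfl | h₁
  · exact h₂
  rcases h₂ with rfl | h₂
  exacts [Or.inr h₁, Or.inr ⟨h₁.1, h₂.2⟩]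

theorem of_mem_Icc (hv : v ∈ Set.Icc p q) (hw : w ∈ Set.Icc p q) (hvq : v ≠ q) (hwp : w ≠ p) :
    ApproxLE p q v w :=
  Or.inr ⟨⟨hv.1, hv.2.lt_of_ne hvq⟩, ⟨hw.1.lt_of_ne' hwp, hw.2⟩⟩

theorem of_mem_Ioo (hv : v ∈ Set.Ioo p q) (hw : w ∈ Set.Ioo p q) : ApproxLE p q v w :=
  Or.inr ⟨Set.Ioo_subset_Ico_self hv, Set.Ioo_subset_Ioc_self hw⟩

theorem left_self (hpq : p < q) (hw : w ∈ Set.Icc p q) : ApproxLE p q p w := by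
  rcases eq_or_ne w p with rfl | hwp
  exacts [.refl _, .of_mem_Icc ⟨le_rfl, hpq.le⟩ hw hpq.ne hwp]

theorem right_self (hpq : p < q) (hv : v ∈ Set.Icc p q) : ApproxLE p q v q := by
  rcases eq_or_ne v q with rfl | hvq
  exacts [.refl _, .of_mem_Icc hv ⟨hpq.le, le_rfl⟩ hvq hpq.ne']

theorem eq_of_left_notMem (h : ApproxLE p q v w) (hv : v ∉ Set.Icc p q) : v = w :=
  h.resolve_right fun h => hv (Set.Ico_subset_Icc_self h.1)

theorem right_mem (h : ApproxLE p q v w) (hv : v ∈ Set.Icc p q) : w ∈ Set.Icc p q := by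
  rcases h with rfl | h
  exacts [hv, Set.Ioc_subset_Icc_self h.2]

theorem right_eq (h : ApproxLE p q v w) (hv : v = q) : w = q :=
  h.elim (· ▸ hv) fun h => absurd hv h.1.2.ne

theorem left_eq (h : ApproxLE p q v w) (hw : w = p) : v = p :=
  h.elim (· ▸ hw) fun h => absurd hw h.2.1.ne'

theorem toDual_iff :
    ApproxLE (OrderDual.toDual q) (OrderDual.toDual p) (OrderDual.toDual w)
      (OrderDual.toDual v) ↔ ApproxLE p q v w := by
  simp only [ApproxLE, Set.mem_Ico, Set.mem_Ioc, OrderDual.toDual_le_toDual,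
    OrderDual.toDual_lt_toDual, OrderDual.toDual_inj]
  grind

theorem min {v₁ v₂ w₁ w₂ : β} (h₁ : ApproxLE p q v₁ w₁) (h₂ : ApproxLE p q v₂ w₂) :
    ApproxLE p q (min v₁ v₂) (min w₁ w₂) := by
  simp only [ApproxLE, Set.mem_Ico, Set.mem_Ioc, min_def] at *
  rcases h₁ with rfl | h₁ <;> rcases h₂ with rfl | h₂ <;> split_ifs <;> grind

theorem max {v₁ v₂ w₁ w₂ : β} (h₁ : ApproxLE p q v₁ w₁) (h₂ : ApproxLE p q v₂ w₂) :
    ApproxLE p q (max v₁ v₂) (max w₁ w₂) := by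
  rw [← toDual_iff, toDual_max, toDual_max]
  exact (toDual_iff.2 h₁).min (toDual_iff.2 h₂)

theorem isLUB {ι : Sort*} {f g : ι → β} {a b : β} (hfg : ∀ i, ApproxLE p q (f i) (g i))
    (ha : IsLUB (Set.range f) a) (hb : IsLUB (Set.range g) b) (hq : a = q → q ∈ Set.range f) :
    ApproxLE p q a b := by
  have of_eq (he : ∀ i, f i = g i) : ApproxLE p q a b := Or.inl (ha.unique (funext he ▸ hb))
  by_cases hhigh : ∃ i, q < f i
  · obtain ⟨i₀, hi₀⟩ := hhigh
    have hg₀ : f i₀ = g i₀ := (hfg i₀).eq_of_left_notMem fun h => h.2.not_gt hi₀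
    refine Or.inl (le_antisymm ((isLUB_le_iff ha).2 ?_) ((isLUB_le_iff hb).2 ?_))
    · rintro _ ⟨i, rfl⟩
      rcases hfg i with he | ⟨hf, -⟩
      · exact he ▸ hb.1 ⟨i, rfl⟩
      · exact (hf.2.trans hi₀).le.trans (hg₀ ▸ hb.1 ⟨i₀, rfl⟩)
    · rintro _ ⟨i, rfl⟩
      rcases hfg i with he | ⟨-, hg⟩
      · exact he ▸ ha.1 ⟨i, rfl⟩
      · exact (hg.2.trans hi₀.le).trans (ha.1 ⟨i₀, rfl⟩)
  push Not at hhigh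
  have hgq (i : ι) : g i ≤ q := (hfg i).elim (· ▸ hhigh i) (·.2.2)
  have haq : a ≤ q := (isLUB_le_iff ha).2 (Set.forall_mem_range.2 hhigh)
  have hbq : b ≤ q := (isLUB_le_iff hb).2 (Set.forall_mem_range.2 hgq)
  by_cases hlow : ∀ i, f i < p
  · exact of_eq fun i => (hfg i).resolve_right fun h => (hlow i).not_ge h.1.1
  push Not at hlow
  obtain ⟨i₀, hi₀⟩ := hlow
  rcases le_or_gt b p with hbp | hpb
  · refine of_eq fun i => (hfg i).resolve_right fun h => ?_
    exact (h.2.1.trans_le (hb.1 ⟨i, rfl⟩)).not_ge hbp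
  rcases haq.lt_or_eq with haq | rfl
  · exact Or.inr ⟨⟨hi₀.trans (ha.1 ⟨i₀, rfl⟩), haq⟩, hpb, hbq⟩
  · obtain ⟨i, hi⟩ := hq rfl
    exact Or.inl (le_antisymm (((hfg i).right_eq hi).symm.le.trans (hb.1 ⟨i, rfl⟩)) hbq)

theorem isGLB {ι : Sort*} {f g : ι → β} {a b : β} (hfg : ∀ i, ApproxLE p q (f i) (g i))
    (ha : IsGLB (Set.range f) a) (hb : IsGLB (Set.range g) b) (hp : b = p → p ∈ Set.range g) :
    ApproxLE p q a b :=
  toDual_iff.1 <| isLUB (f := OrderDual.toDual ∘ g) (g := OrderDual.toDual ∘ f)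
    (fun i => toDual_iff.2 (hfg i)) hb.dual ha.dual hp

end ApproxLE

end ApproxLE

@[elab_as_elim]
theorem W.induction {motive : W → Prop} (F : ∀ a ha, motive (WF a ha)) (Z : motive WZ)
    (T : ∀ a ha, motive (WT a ha)) (x : W) : motive x := by
  obtain ⟨_ | _ | a, h⟩ := x
  exacts [F _ h, Z, T a h]

theorem W.ext_iff {v w : W} : v = w ↔ v.1 = w.1 := Subtype.ext_iff

section Order

variable {a b α : Ordinal} {ha : a < omega1} {hb : b < omega1}

@[simp] theorem WF_lt_WF : WF a ha < WF b hb ↔ a < b := Iff.rfl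
@[simp] theorem WT_lt_WT : WT a ha < WT b hb ↔ b < a := Iff.rfl
@[simp] theorem WF_lt_WZ : WF a ha < WZ := trivial
@[simp] theorem WF_lt_WT : WF a ha < WT b hb := trivial
@[simp] theorem WZ_lt_WT : WZ < WT a ha := trivial

@[simp] theorem WF_le_WF : WF a ha ≤ WF b hb ↔ a ≤ b := by simp [← not_lt]
@[simp] theorem WT_le_WT : WT a ha ≤ WT b hb ↔ b ≤ a := by simp [← not_lt]
@[simp] theorem WF_le_WZ : WF a ha ≤ WZ := WF_lt_WZ.le
@[simp] theorem WF_le_WT : WF a ha ≤ WT b hb := WF_lt_WT.le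
@[simp] theorem WZ_le_WT : WZ ≤ WT a ha := WZ_lt_WT.le

@[simp] theorem WF_inj : WF a ha = WF b hb ↔ a = b :=
  W.ext_iff.trans (TVPre.F.injEq a b).to_iff
@[simp] theorem WF_ne_WT : WF a ha ≠ WT b hb := WF_lt_WT.ne

@[simp] theorem degLT_WF : degLT (WF a ha) α ↔ a < α := Iff.rfl
@[simp] theorem degLT_WT : degLT (WT a ha) α ↔ a < α := Iff.rfl
@[simp] theorem not_degLT_WZ : ¬ degLT WZ α := id

@[simp] theorem Wneg_WF : Wneg (WF a ha) = WT (a + 1) (succ_lt_omega1 ha) := rfl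
@[simp] theorem Wneg_WZ : Wneg WZ = WZ := rfl
@[simp] theorem Wneg_WT : Wneg (WT a ha) = WF (a + 1) (succ_lt_omega1 ha) := rfl

end Order

section SupInf

variable {M : Set W} {a : Ordinal}

theorem mem_TIdx : a ∈ TIdx M ↔ ∃ ha, WT a ha ∈ M := by
  refine ⟨fun h => ⟨mem_lt_omega1_of_TIdx h, ?_⟩, fun ⟨_, h⟩ => ⟨_, h, rfl⟩⟩
  obtain ⟨w, hw, hwa⟩ := h
  convert hw
  exact Subtype.ext hwa.symm

theorem mem_FIdx : a ∈ FIdx M ↔ ∃ ha, WF a ha ∈ M := by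
  refine ⟨fun h => ⟨mem_lt_omega1_of_FIdx h, ?_⟩, fun ⟨_, h⟩ => ⟨_, h, rfl⟩⟩
  obtain ⟨w, hw, hwa⟩ := h
  convert hw
  exact Subtype.ext hwa.symm

theorem isLUB_Wsup (M : Set W) : IsLUB M (Wsup M) := by
  unfold Wsup
  split_ifs with hT hZ hF
  · refine IsGreatest.isLUB ⟨(mem_TIdx.1 (csInf_mem hT)).2, fun x hx => ?_⟩
    induction x using W.induction with
    | T a ha => simpa using csInf_le' (mem_TIdx.2 ⟨ha, hx⟩)
    | _ => simp
  · refine IsGreatest.isLUB ⟨hZ, fun x hx => ?_⟩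
    induction x using W.induction with
    | T a ha => exact absurd ⟨a, mem_TIdx.2 ⟨ha, hx⟩⟩ hT
    | _ => simp
  · refine ⟨fun x hx => ?_, fun y hy => ?_⟩
    · induction x using W.induction with
      | F a ha =>
        have hbdd : BddAbove (FIdx M) := ⟨omega1, fun c hc => (mem_lt_omega1_of_FIdx hc).le⟩
        simpa using le_csSup hbdd (mem_FIdx.2 ⟨ha, hx⟩)
      | Z => exact absurd hx hZ
      | T a ha => exact absurd ⟨a, mem_TIdx.2 ⟨ha, hx⟩⟩ hT
    · induction y using W.induction with
      | F d hd =>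
        refine WF_le_WF.2 (csSup_le' fun c hc => ?_)
        obtain ⟨hc, hcM⟩ := mem_FIdx.1 hc
        exact WF_le_WF.1 (hy hcM)
      | _ => simp
  · refine ⟨fun x hx => ?_, fun y hy => ?_⟩
    · induction x using W.induction with
      | T a ha => exact absurd ⟨a, mem_TIdx.2 ⟨ha, hx⟩⟩ hT
      | _ => simp
    · induction y using W.induction with
      | F d hd =>
        refine absurd (lt_of_le_of_lt (csSup_le' fun c hc => ?_) hd) hF
        obtain ⟨hc, hcM⟩ := mem_FIdx.1 hc
        exact WF_le_WF.1 (hy hcM)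
      | _ => simp

theorem WT_mem_of_Wsup_eq {ha : a < omega1} (h : Wsup M = WT a ha) : WT a ha ∈ M := by
  unfold Wsup at h
  split_ifs at h with hT
  · cases h
    exact (mem_TIdx.1 (csInf_mem hT)).2
  all_goals cases h

theorem isGLB_Winf (M : Set W) : IsGLB M (Winf M) := by
  unfold Winf
  split_ifs with hF hZ hT
  · refine IsLeast.isGLB ⟨(mem_FIdx.1 (csInf_mem hF)).2, fun x hx => ?_⟩
    induction x using W.induction with
    | F a ha => simpa using csInf_le' (mem_FIdx.2 ⟨ha, hx⟩)
    | _ => simp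
  · refine IsLeast.isGLB ⟨hZ, fun x hx => ?_⟩
    induction x using W.induction with
    | F a ha => exact absurd ⟨a, mem_FIdx.2 ⟨ha, hx⟩⟩ hF
    | _ => simp
  · refine ⟨fun x hx => ?_, fun y hy => ?_⟩
    · induction x using W.induction with
      | F a ha => exact absurd ⟨a, mem_FIdx.2 ⟨ha, hx⟩⟩ hF
      | Z => exact absurd hx hZ
      | T a ha =>
        have hbdd : BddAbove (TIdx M) := ⟨omega1, fun c hc => (mem_lt_omega1_of_TIdx hc).le⟩
        simpa using le_csSup hbdd (mem_TIdx.2 ⟨ha, hx⟩)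
    · induction y using W.induction with
      | T d hd =>
        refine WT_le_WT.2 (csSup_le' fun c hc => ?_)
        obtain ⟨hc, hcM⟩ := mem_TIdx.1 hc
        exact WT_le_WT.1 (hy hcM)
      | _ => simp
  · refine ⟨fun x hx => ?_, fun y hy => ?_⟩
    · induction x using W.induction with
      | F a ha => exact absurd ⟨a, mem_FIdx.2 ⟨ha, hx⟩⟩ hF
      | _ => simp
    · induction y using W.induction with
      | T d hd =>
        refine absurd (lt_of_le_of_lt (csSup_le' fun c hc => ?_) hd) hT
        obtain ⟨hc, hcM⟩ := mem_TIdx.1 hc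
        exact WT_le_WT.1 (hy hcM)
      | _ => simp

theorem WF_mem_of_Winf_eq {ha : a < omega1} (h : Winf M = WF a ha) : WF a ha ∈ M := by
  unfold Winf at h
  split_ifs at h with hF
  · cases h
    exact (mem_FIdx.1 (csInf_mem hF)).2
  all_goals cases h

end SupInf

section Monotone

variable {α : Ordinal} {hα : α < omega1} {v w : W}

theorem degLT_iff_notMem_Icc (hα : α < omega1) :
    degLT v α ↔ v ∉ Set.Icc (WF α hα) (WT α hα) := by
  induction v using W.induction <;> simp

theorem Wneg_mem_Ioo (hv : v ∈ Set.Icc (WF α hα) (WT α hα)) :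
    Wneg v ∈ Set.Ioo (WF α hα) (WT α hα) := by
  induction v using W.induction <;> simp_all [Order.lt_add_one_iff]

theorem approxLE_Wneg (h : ApproxLE (WF α hα) (WT α hα) v w) :
    ApproxLE (WF α hα) (WT α hα) (Wneg v) (Wneg w) := by
  rcases h with rfl | ⟨hv, hw⟩
  · exact .refl _
  · exact .of_mem_Ioo (Wneg_mem_Ioo (Set.Ico_subset_Icc_self hv))
      (Wneg_mem_Ioo (Set.Ioc_subset_Icc_self hw))

theorem approxLE_Wsup {ι : Sort*} {f g : ι → W}
    (hfg : ∀ i, ApproxLE (WF α hα) (WT α hα) (f i) (g i)) :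
    ApproxLE (WF α hα) (WT α hα) (Wsup (Set.range f)) (Wsup (Set.range g)) :=
  .isLUB hfg (isLUB_Wsup _) (isLUB_Wsup _) WT_mem_of_Wsup_eq

theorem approxLE_Winf {ι : Sort*} {f g : ι → W}
    (hfg : ∀ i, ApproxLE (WF α hα) (WT α hα) (f i) (g i)) :
    ApproxLE (WF α hα) (WT α hα) (Winf (Set.range f)) (Winf (Set.range g)) :=
  .isGLB hfg (isGLB_Winf _) (isGLB_Winf _) WF_mem_of_Winf_eq

theorem Formula.approxLE_eval {I J : Interp L}
    (hIJ : ∀ A, ApproxLE (WF α hα) (WT α hα) (I A) (J A)) (φ : Formula L) (h : ℕ → HU L) :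
    ApproxLE (WF α hα) (WT α hα) (φ.eval I h) (φ.eval J h) := by
  induction φ generalizing h with
  | verum | falsum => exact .refl _
  | atom p ts => exact hIJ _
  | neg φ ih => exact approxLE_Wneg (ih h)
  | conj φ ψ ihφ ihψ => exact (ihφ h).min (ihψ h)
  | disj φ ψ ihφ ihψ => exact (ihφ h).max (ihψ h)
  | ex v φ ih => exact approxLE_Wsup fun u => ih _
  | all v φ ih => exact approxLE_Winf fun u => ih _

theorem TP_eq_Wsup_range (P : Program L) (J : Interp L) (A : GroundAtom L) :
    TP P J A = Wsup (Set.range fun φ : {φ : Formula L // (A, φ) ∈ groundInstances P} =>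
      φ.1.evalClosed J) := by
  unfold TP
  congr 1
  ext w
  exact ⟨fun ⟨φ, hφ, hw⟩ => ⟨⟨φ, hφ⟩, hw.symm⟩, fun ⟨φ, hw⟩ => ⟨φ.1, φ.2, hw.symm⟩⟩

theorem approxLE_TP (P : Program L) {I J : Interp L}
    (hIJ : ∀ A, ApproxLE (WF α hα) (WT α hα) (I A) (J A)) (A : GroundAtom L) :
    ApproxLE (WF α hα) (WT α hα) (TP P I A) (TP P J A) := by
  rw [TP_eq_Wsup_range, TP_eq_Wsup_range]
  exact approxLE_Wsup fun φ => φ.1.approxLE_eval hIJ _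

theorem apply_eq_of_degLT {I J : Interp L} (h : ∀ β < α, eqa β I J) {A : GroundAtom L}
    (hA : degLT (I A) α) : J A = I A := by
  generalize hv : I A = v at hA
  induction v using W.induction with
  | F b hb =>
    have hmem : A ∈ Ifalse I b := congrArg Subtype.val hv
    rw [(h b hA b le_rfl).1] at hmem
    exact Subtype.ext hmem
  | Z => exact absurd hA not_degLT_WZ
  | T b hb =>
    have hmem : A ∈ Itrue I b := congrArg Subtype.val hv
    rw [(h b hA b le_rfl).2] at hmem
    exact Subtype.ext hmem

theorem approxLE_of_sqa {I J : Interp L} (h : sqa α I J) (A : GroundAtom L) :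
    ApproxLE (WF α hα) (WT α hα) (I A) (J A) := by
  obtain ⟨heq, hF, hT⟩ := h
  by_cases hI : degLT (I A) α
  · rw [apply_eq_of_degLT heq hI]
    exact .refl _
  by_cases hJ : degLT (J A) α
  · rw [apply_eq_of_degLT (I := J) (J := I)
      (fun β hβ γ hγ => ⟨(heq β hβ γ hγ).1.symm, (heq β hβ γ hγ).2.symm⟩) hJ]
    exact .refl _
  rw [degLT_iff_notMem_Icc hα, not_not] at hI hJ
  by_cases hIT : I A = WT α hα
  · rw [hIT, (Subtype.ext (hT (congrArg Subtype.val hIT)) : J A = WT α hα)]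
    exact .refl _
  by_cases hJF : J A = WF α hα
  · rw [hJF, (Subtype.ext (hF (congrArg Subtype.val hJF)) : I A = WF α hα)]
    exact .refl _
  exact .of_mem_Icc hI hJ hIT hJF

end Monotone

section Countable

/-- Terms are finitely branching trees; embedding them into a `WType` makes them countable. -/
def Term.arity (L : Language) : ℕ ⊕ Fin L.nConst ⊕ Fin L.nFun → ℕ
  | .inr (.inr f) => L.funAr f
  | _ => 0

def Term.toWType : Term L → WType fun a => Fin (Term.arity L a)
  | .var n => ⟨.inl n, Fin.elim0⟩
  | .const c => ⟨.inr (.inl c), Fin.elim0⟩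
  | .func f ts => ⟨.inr (.inr f), fun i => (ts i).toWType⟩

def Term.ofWType : (WType fun a => Fin (Term.arity L a)) → Term L
  | ⟨.inl n, _⟩ => .var n
  | ⟨.inr (.inl c), _⟩ => .const c
  | ⟨.inr (.inr f), ts⟩ => .func f fun i => Term.ofWType (ts i)

theorem Term.ofWType_toWType (t : Term L) : Term.ofWType t.toWType = t := by
  induction t with
  | var | const => rfl
  | func f ts ih => simp only [Term.toWType, Term.ofWType, ih]

instance : Countable (Term L) :=
  (Function.LeftInverse.injective Term.ofWType_toWType).countable

instance : Countable (HU L) := Subtype.countable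

instance : Countable (GroundAtom L) :=
  Function.Injective.countable (f := fun A : GroundAtom L =>
    (⟨A.pred, A.args⟩ : Σ p, Fin (L.predAr p) → HU L)) fun ⟨_, _⟩ ⟨_, _⟩ h => by cases h; rfl

end Countable

section Iter

variable {P : Program L} {α : Ordinal} {hα : α < omega1} {I : Interp L}

theorem iter_zero : iter P α hα I 0 = I :=
  Ordinal.limitRecOn_zero _ _ _

theorem iter_add_one (β : Ordinal) : iter P α hα I (β + 1) = TP P (iter P α hα I β) :=
  Ordinal.limitRecOn_add_one _ _ _ _

theorem iter_limit {β : Ordinal} (hβ : Order.IsSuccLimit β) (A : GroundAtom L) :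
    iter P α hα I β A =
      if degLT (I A) α then I A
      else if ∃ γ < β, iter P α hα I γ A = WT α hα then WT α hα
      else if ∀ γ < β, iter P α hα I γ A = WF α hα then WF α hα
      else WF (α + 1) (succ_lt_omega1 hα) := by
  rw [iter]
  erw [Ordinal.limitRecOn_limit _ _ _ _ hβ]
  refine if_congr Iff.rfl rfl (if_congr ?_ rfl (if_congr ?_ rfl rfl)) <;>
    simp only [W.ext_iff, exists_prop] <;> rfl

theorem approxLE_iter_limit {o : Ordinal} (ho : Order.IsSuccLimit o)
    (hbase : ∀ γ < o, ∀ A, ApproxLE (WF α hα) (WT α hα) (I A) (iter P α hα I γ A))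
    {γ : Ordinal} (hγ : γ < o) (A : GroundAtom L) :
    ApproxLE (WF α hα) (WT α hα) (iter P α hα I γ A) (iter P α hα I o A) := by
  have hmem := (hbase γ hγ A).right_mem
  rw [iter_limit ho A]
  split_ifs with hlow hT hF
  · rw [(hbase γ hγ A).eq_of_left_notMem ((degLT_iff_notMem_Icc hα).1 hlow)]
    exact .refl _
  · exact .right_self (by simp) (hmem (by simpa [degLT_iff_notMem_Icc hα] using hlow))
  · rw [hF γ hγ]
    exact .refl _
  · push Not at hT
    exact .of_mem_Icc (hmem (by simpa [degLT_iff_notMem_Icc hα] using hlow)) (by simp)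
      (hT γ hγ) (by simp)

theorem approxLE_TP_iter_limit (hI : ∀ A, ApproxLE (WF α hα) (WT α hα) (I A) (TP P I A))
    {o : Ordinal} (ho : Order.IsSuccLimit o)
    (hstep : ∀ γ < o, ∀ A,
      ApproxLE (WF α hα) (WT α hα) (iter P α hα I γ A) (TP P (iter P α hα I γ) A))
    (hlim : ∀ γ < o, ∀ A,
      ApproxLE (WF α hα) (WT α hα) (iter P α hα I γ A) (iter P α hα I o A))
    (A : GroundAtom L) :
    ApproxLE (WF α hα) (WT α hα) (iter P α hα I o A) (TP P (iter P α hα I o) A) := by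
  have hTP (γ : Ordinal) (hγ : γ < o) := approxLE_TP P (hlim γ hγ) A
  have hbase : ApproxLE (WF α hα) (WT α hα) (I A) (TP P (iter P α hα I o) A) := by
    have h0 := hTP 0 ho.pos
    rw [iter_zero] at h0
    exact (hI A).trans h0
  have hmem (hlow : ¬degLT (I A) α) :=
    hbase.right_mem (by simpa [degLT_iff_notMem_Icc hα] using hlow)
  rw [iter_limit ho A]
  split_ifs with hlow hT hF
  · exact hbase
  · obtain ⟨γ, hγ, hγA⟩ := hT
    rw [(hTP γ hγ).right_eq ((hstep γ hγ A).right_eq hγA)]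
    exact .refl _
  · exact .left_self (by simp) (hmem hlow)
  · push Not at hF
    obtain ⟨γ, hγ, hne⟩ := hF
    refine .of_mem_Icc (by simp) (hmem hlow) (by simp) fun h => hne ?_
    exact (hstep γ hγ A).left_eq ((hTP γ hγ).left_eq h)

theorem approxLE_iter (hI : ∀ A, ApproxLE (WF α hα) (WT α hα) (I A) (TP P I A))
    (j : Ordinal) :
    (∀ i ≤ j, ∀ A, ApproxLE (WF α hα) (WT α hα) (iter P α hα I i A) (iter P α hα I j A)) ∧
      ∀ A, ApproxLE (WF α hα) (WT α hα) (iter P α hα I j A) (TP P (iter P α hα I j) A) := by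
  induction j using Ordinal.limitRecOn with
  | zero =>
    refine ⟨fun i hi A => ?_, fun A => ?_⟩
    · rw [nonpos_iff_eq_zero.1 hi]
      exact .refl _
    · rw [iter_zero]
      exact hI A
  | add_one o ih =>
    refine ⟨fun i hi A => ?_, fun A => ?_⟩
    · rcases hi.lt_or_eq with hi | rfl
      · rw [iter_add_one]
        exact (ih.1 i (Order.lt_add_one_iff.1 hi) A).trans (ih.2 A)
      · exact .refl _
    · rw [iter_add_one]
      exact approxLE_TP P ih.2 A
  | limit o ho ih =>
    have hbase (γ : Ordinal) (hγ : γ < o) (A : GroundAtom L) :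
        ApproxLE (WF α hα) (WT α hα) (I A) (iter P α hα I γ A) := by
      simpa [iter_zero] using (ih γ hγ).1 0 zero_le A
    have hlim (γ : Ordinal) (hγ : γ < o) := approxLE_iter_limit ho hbase hγ
    refine ⟨fun i hi A => ?_, approxLE_TP_iter_limit hI ho (fun γ hγ => (ih γ hγ).2) hlim⟩
    rcases hi.lt_or_eq with hi | rfl
    exacts [hlim i hi A, .refl _]

theorem exists_approxLE_iter_omega1_apply
    (hI : ∀ A, ApproxLE (WF α hα) (WT α hα) (I A) (TP P I A)) (A : GroundAtom L) :
    ∃ γ < omega1, ∀ j, γ ≤ j → j < omega1 →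
      ApproxLE (WF α hα) (WT α hα) (iter P α hα I omega1 A) (iter P α hα I j A) := by
  have hchain {i j : Ordinal} (hij : i ≤ j) := (approxLE_iter hI j).1 i hij A
  have hbase {j : Ordinal} : ApproxLE (WF α hα) (WT α hα) (I A) (iter P α hα I j A) := by
    simpa [iter_zero] using hchain (zero_le (a := j))
  rw [iter_limit omega1_isLimit A]
  split_ifs with hlow hT hF
  · refine ⟨0, zero_lt_omega1, fun j _ _ => ?_⟩
    rw [hbase.eq_of_left_notMem ((degLT_iff_notMem_Icc hα).1 hlow)]
    exact .refl _
  · obtain ⟨γ, hγ, hγA⟩ := hT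
    refine ⟨γ, hγ, fun j hj _ => ?_⟩
    rw [(hchain hj).right_eq hγA]
    exact .refl _
  · refine ⟨0, zero_lt_omega1, fun j _ hj => ?_⟩
    rw [hF j hj]
    exact .refl _
  · push Not at hF
    obtain ⟨γ, hγ, hne⟩ := hF
    refine ⟨γ, hγ, fun j hj _ => .of_mem_Icc (by simp) ?_ (by simp)
      fun h => hne ((hchain hj).left_eq h)⟩
    exact hbase.right_mem (by simpa [degLT_iff_notMem_Icc hα] using hlow)

theorem exists_approxLE_iter_omega1
    (hI : ∀ A, ApproxLE (WF α hα) (WT α hα) (I A) (TP P I A)) :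
    ∃ k < omega1, ∀ A,
      ApproxLE (WF α hα) (WT α hα) (iter P α hα I omega1 A) (iter P α hα I k A) := by
  choose γ hγ hstab using exists_approxLE_iter_omega1_apply hI
  have hk : iSup γ < omega1 := Ordinal.iSup_lt_omega_one hγ
  exact ⟨iSup γ, hk, fun A => hstab A _ (Ordinal.le_iSup γ A) hk⟩

end Iter

/-- Extension Theorem II. -/
theorem extension_theorem_II {L : Language} (P : Program L) (α : Ordinal)
    (hα : α < omega1) (I : Interp L) (hI : sqa α I (TP P I))
    (φ : Formula L) (h : ℕ → HU L) :
    (degLT (φ.eval I h) α → φ.eval (iter P α hα I omega1) h = φ.eval I h) ∧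
    ((∃ i < omega1, φ.eval (iter P α hα I i) h = WT α hα) →
      φ.eval (iter P α hα I omega1) h = WT α hα) ∧
    ((∀ i < omega1, φ.eval (iter P α hα I i) h = WF α hα) →
      φ.eval (iter P α hα I omega1) h = WF α hα) ∧
    ((WF α hα < φ.eval (iter P α hα I omega1) h ∧
        φ.eval (iter P α hα I omega1) h < WT α hα) ↔
      (¬ degLT (φ.eval I h) α ∧
        ¬ (∃ i < omega1, φ.eval (iter P α hα I i) h = WT α hα) ∧
        ¬ (∀ i < omega1, φ.eval (iter P α hα I i) h = WF α hα))) := by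
  have hTP : ∀ A, ApproxLE (WF α hα) (WT α hα) (I A) (TP P I A) := approxLE_of_sqa hI
  have hchain {i : Ordinal} (hi : i ≤ omega1) : ApproxLE (WF α hα) (WT α hα)
      (φ.eval (iter P α hα I i) h) (φ.eval (iter P α hα I omega1) h) :=
    Formula.approxLE_eval (fun A => (approxLE_iter hTP omega1).1 i hi A) φ h
  have hbase := hchain zero_le
  rw [iter_zero] at hbase
  obtain ⟨k, hk, hstab⟩ := exists_approxLE_iter_omega1 hTP
  have hback := Formula.approxLE_eval hstab φ h
  have hC1 (hlow : degLT (φ.eval I h) α) : φ.eval (iter P α hα I omega1) h = φ.eval I h :=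
    (hbase.eq_of_left_notMem ((degLT_iff_notMem_Icc hα).1 hlow)).symm
  have hC2 : (∃ i < omega1, φ.eval (iter P α hα I i) h = WT α hα) →
      φ.eval (iter P α hα I omega1) h = WT α hα :=
    fun ⟨i, hi, hT⟩ => (hchain hi.le).right_eq hT
  have hC3 (hF : ∀ i < omega1, φ.eval (iter P α hα I i) h = WF α hα) :
      φ.eval (iter P α hα I omega1) h = WF α hα := hback.left_eq (hF k hk)
  refine ⟨hC1, hC2, hC3, fun hx => ⟨fun hlow => ?_, fun hT => hx.2.ne (hC2 hT),
    fun hF => hx.1.ne' (hC3 hF)⟩, fun ⟨hlow, hT, hF⟩ => ?_⟩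
  · exact (degLT_iff_notMem_Icc hα).1 hlow (Set.Ioo_subset_Icc_self (hC1 hlow ▸ hx))
  · have hmem := hbase.right_mem (by simpa [degLT_iff_notMem_Icc hα] using hlow)
    exact ⟨hmem.1.lt_of_ne fun hx => hF fun i hi => (hchain hi.le).left_eq hx.symm,
      hmem.2.lt_of_ne fun hx => hT ⟨k, hk, hback.right_eq hx⟩⟩

end ILP
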